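/- arXiv:1505.01790 — 4 statements merged into one kernel-verified Lean document; each statement's English description precedes it below -/
import Mathlib

section
/- Let J be the solution of the ODE J''(t) = (t/2)^{-2-ε} J(t) on [2,∞) with J(2) = 0 and J'(2) = 1, where 0 < ε < 1/100. Then J' is nondecreasing, 1 ≤ J'(t) for all t ≥ 2, the limit J'(∞) = lim_{t→∞} J'(t) exists and satisfies J'(∞) ≤ exp(∫₂^∞ (t-2)(t/2)^{-2-ε} dt) < ∞, and t - 2 ≤ J(t) ≤ J'(∞)(t-2) for all t ≥ 2. -/
open Filter

/-!
`J'` stays positive: at a first point `c` where `J' ≤ 0`, `J` would be nondecreasing on `[2, c]`,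
so `J ≥ 0` and `J'' ≥ 0` there, forcing `J' c ≥ J' 2 > 0`. Hence `J ≥ 0`, `J'` is nondecreasing
and `J t ≤ (t - 2) J' t`. With `q t = (t / 2) ^ (-2 - ε)` this gives
`(log J')' = q J / J' ≤ (t - 2) q`, and `(t - 2) q` is integrable on `(2, ∞)`, so `J'` is bounded
by `exp ∫ (t - 2) q` and converges; the bounds on `J` follow from `1 ≤ J' ≤ J'(∞)`.
-/

open Set MeasureTheory Topology

theorem monotoneOn_of_hasDerivAt_nonneg {D : Set ℝ} (hD : Convex ℝ D) {f f' : ℝ → ℝ}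
    (hf : ∀ x ∈ D, HasDerivAt f (f' x) x) (hf' : ∀ x ∈ interior D, 0 ≤ f' x) :
    MonotoneOn f D :=
  monotoneOn_of_hasDerivWithinAt_nonneg hD (fun x hx => (hf x hx).continuousAt.continuousWithinAt)
    (fun x hx => (hf x (interior_subset hx)).hasDerivWithinAt) hf'

section MeanValue

variable {f f' : ℝ → ℝ} {a b C : ℝ}

theorem sub_le_mul_sub_of_hasDerivAt_le (hab : a ≤ b)
    (hf : ∀ x ∈ Icc a b, HasDerivAt f (f' x) x) (hC : ∀ x ∈ Icc a b, f' x ≤ C) :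
    f b - f a ≤ C * (b - a) := by
  have := monotoneOn_of_hasDerivAt_nonneg (f := fun x => C * x - f x) (convex_Icc a b)
    (fun x hx => ((hasDerivAt_id x).const_mul C).sub (hf x hx) |>.congr_deriv (by simp))
    (fun x hx => sub_nonneg.2 (hC x (interior_subset hx)))
    (left_mem_Icc.2 hab) (right_mem_Icc.2 hab) hab
  linarith

theorem mul_sub_le_sub_of_le_hasDerivAt (hab : a ≤ b)
    (hf : ∀ x ∈ Icc a b, HasDerivAt f (f' x) x) (hC : ∀ x ∈ Icc a b, C ≤ f' x) :
    C * (b - a) ≤ f b - f a := by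
  have := sub_le_mul_sub_of_hasDerivAt_le (f := fun x => -f x) (C := -C) hab
    (fun x hx => (hf x hx).neg) (fun x hx => neg_le_neg (hC x hx))
  linarith

end MeanValue

theorem MonotoneOn.exists_tendsto_atTop_of_le {f : ℝ → ℝ} {a M : ℝ}
    (hf : MonotoneOn f (Ici a)) (hM : ∀ t ∈ Ici a, f t ≤ M) :
    ∃ l, Tendsto f atTop (𝓝 l) ∧ (∀ t ∈ Ici a, f t ≤ l) ∧ l ≤ M := by
  set g : ℝ → ℝ := fun t => f (max t a)
  have hg : Monotone g := fun s t hst =>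
    hf (le_max_right s a) (le_max_right t a) (max_le_max hst le_rfl)
  have hgM : ∀ t, g t ≤ M := fun t => hM _ (le_max_right t a)
  have hbdd : BddAbove (range g) := ⟨M, forall_mem_range.2 hgM⟩
  have hfg : ∀ t ∈ Ici a, g t = f t := fun t ht => congrArg f (max_eq_left ht)
  refine ⟨⨆ t, g t, ?_, fun t ht => hfg t ht ▸ le_ciSup hbdd t, ciSup_le hgM⟩
  exact (tendsto_atTop_ciSup hg hbdd).congr' <|
    (eventually_ge_atTop a).mono fun t ht => hfg t ht

section Jacobi

variable {a : ℝ} {q J J' : ℝ → ℝ}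

theorem jacobi_deriv_pos (hJ : ∀ t ∈ Ici a, HasDerivAt J (J' t) t)
    (hJ' : ∀ t ∈ Ici a, HasDerivAt J' (q t * J t) t) (hq : ∀ t ∈ Ici a, 0 ≤ q t)
    (hJa : J a = 0) (hJ'a : 0 < J' a) : ∀ t ∈ Ici a, 0 < J' t := by
  intro T hT
  by_contra! hT0
  set A := Icc a T ∩ J' ⁻¹' Iic 0
  have hA : IsClosed A := ContinuousOn.preimage_isClosed_of_isClosed
    (fun t ht => (hJ' t ht.1).continuousAt.continuousWithinAt) isClosed_Icc isClosed_Iic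
  have hAbdd : BddBelow A := ⟨a, fun t ht => ht.1.1⟩
  set c := sInf A
  have hcA : c ∈ A := hA.csInf_mem ⟨T, ⟨hT, le_rfl⟩, hT0⟩ hAbdd
  have hpos : ∀ t ∈ Ico a c, 0 < J' t := fun t ht => by
    by_contra! h
    exact (csInf_le hAbdd ⟨⟨ht.1, ht.2.le.trans hcA.1.2⟩, h⟩).not_gt ht.2
  have hsub : Icc a c ⊆ Ici a := fun t ht => ht.1
  have hJmono : MonotoneOn J (Icc a c) :=
    monotoneOn_of_hasDerivAt_nonneg (convex_Icc a c) (fun t ht => hJ t (hsub ht))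
      (fun t ht => by rw [interior_Icc] at ht; exact (hpos t ⟨ht.1.le, ht.2⟩).le)
  have hJ'mono : MonotoneOn J' (Icc a c) :=
    monotoneOn_of_hasDerivAt_nonneg (convex_Icc a c) (fun t ht => hJ' t (hsub ht))
      (fun t ht => mul_nonneg (hq t (hsub (interior_subset ht)))
        (hJa ▸ hJmono (left_mem_Icc.2 hcA.1.1) (interior_subset ht) (interior_subset ht).1))
  have := hJ'mono (left_mem_Icc.2 hcA.1.1) (right_mem_Icc.2 hcA.1.1) hcA.1.1
  exact (hJ'a.trans_le this).not_ge hcA.2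

theorem jacobi_monotoneOn_deriv (hJ : ∀ t ∈ Ici a, HasDerivAt J (J' t) t)
    (hJ' : ∀ t ∈ Ici a, HasDerivAt J' (q t * J t) t) (hq : ∀ t ∈ Ici a, 0 ≤ q t)
    (hJa : J a = 0) (hJ'a : 0 < J' a) : MonotoneOn J' (Ici a) := by
  have hJmono : MonotoneOn J (Ici a) := monotoneOn_of_hasDerivAt_nonneg (convex_Ici a) hJ
    fun t ht => (jacobi_deriv_pos hJ hJ' hq hJa hJ'a t (interior_subset ht)).le
  exact monotoneOn_of_hasDerivAt_nonneg (convex_Ici a) hJ' fun t ht =>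
    mul_nonneg (hq t (interior_subset ht))
      (hJa ▸ hJmono self_mem_Ici (interior_subset ht) (interior_subset ht))

theorem jacobi_log_deriv_sub_le (hJ : ∀ t ∈ Ici a, HasDerivAt J (J' t) t)
    (hJ' : ∀ t ∈ Ici a, HasDerivAt J' (q t * J t) t) (hq : ∀ t ∈ Ici a, 0 ≤ q t)
    (hq_cont : ContinuousOn q (Ici a)) (hJa : J a = 0) (hJ'a : 0 < J' a) :
    ∀ t ∈ Ici a, Real.log (J' t) - Real.log (J' a) ≤ ∫ s in a..t, (s - a) * q s := by
  intro t ht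
  have hpos := jacobi_deriv_pos hJ hJ' hq hJa hJ'a
  have hmono := jacobi_monotoneOn_deriv hJ hJ' hq hJa hJ'a
  have hsub : uIcc a t ⊆ Ici a := by rw [uIcc_of_le ht]; exact fun s hs => hs.1
  have hlog : ∀ s ∈ uIcc a t, HasDerivAt (fun s => Real.log (J' s)) (q s * J s / J' s) s :=
    fun s hs => (hJ' s (hsub hs)).log (hpos s (hsub hs)).ne'
  have hJle : ∀ s ∈ Ici a, J s ≤ (s - a) * J' s := fun s hs => by
    have := sub_le_mul_sub_of_hasDerivAt_le hs (fun x hx => hJ x hx.1)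
      (fun x hx => hmono hx.1 hs hx.2)
    rw [hJa] at this
    linarith
  have hq' : ContinuousOn q (uIcc a t) := hq_cont.mono hsub
  have hJ'_cont : ContinuousOn J' (uIcc a t) := fun s hs =>
    (hJ' s (hsub hs)).continuousAt.continuousWithinAt
  have hint : IntervalIntegrable (fun s => q s * J s / J' s) volume a t :=
    ContinuousOn.intervalIntegrable <|
      (hq'.mul fun s hs => (hJ s (hsub hs)).continuousAt.continuousWithinAt).div hJ'_cont
        fun s hs => (hpos s (hsub hs)).ne'
  rw [← intervalIntegral.integral_eq_sub_of_hasDerivAt hlog hint]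
  refine intervalIntegral.integral_mono_on ht hint
    (((continuousOn_id.sub continuousOn_const).mul hq').intervalIntegrable) fun s hs => ?_
  have hs' : s ∈ Ici a := hs.1
  rw [div_le_iff₀ (hpos s hs')]
  calc q s * J s ≤ q s * ((s - a) * J' s) := mul_le_mul_of_nonneg_left (hJle s hs') (hq s hs')
    _ = (s - a) * q s * J' s := by ring

end Jacobi

theorem intervalIntegral_le_setIntegral_Ioi {f : ℝ → ℝ} {a b : ℝ} (hab : a ≤ b)
    (hf : IntegrableOn f (Ioi a)) (hf₀ : ∀ t ∈ Ioi a, 0 ≤ f t) :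
    ∫ t in a..b, f t ≤ ∫ t in Ioi a, f t := by
  rw [intervalIntegral.integral_of_le hab]
  exact setIntegral_mono_set hf ((ae_restrict_mem measurableSet_Ioi).mono hf₀)
    Ioc_subset_Ioi_self.eventuallyLE

theorem integrableOn_Ioi_sub_mul_div_rpow {c p : ℝ} (hc : 0 < c) (hp : p < -2) :
    IntegrableOn (fun t => (t - c) * (t / c) ^ p) (Ioi c) := by
  -- dominated by `t (t / c) ^ p = c ^ (-p) t ^ (p + 1)`
  refine Integrable.mono'
    ((integrableOn_Ioi_rpow_of_lt (a := p + 1) (by linarith) hc).const_mul (c ^ (-p))) ?_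
    ((ae_restrict_iff' measurableSet_Ioi).2 (Eventually.of_forall fun t (ht : c < t) => ?_))
  · exact Measurable.aestronglyMeasurable (by fun_prop)
  · have ht0 : 0 < t := hc.trans ht
    rw [Real.norm_of_nonneg (mul_nonneg (sub_nonneg.2 ht.le) (by positivity)),
      Real.div_rpow ht0.le hc.le, Real.rpow_add ht0, Real.rpow_one, Real.rpow_neg hc.le]
    calc (t - c) * (t ^ p / c ^ p) ≤ t * (t ^ p / c ^ p) := by gcongr; linarith
      _ = _ := by field_simp

theorem jacobi_comparison_ODE_properties_general
    (ε : ℝ) (hε : 0 < ε)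
    (J J' : ℝ → ℝ)
    (hJ : ∀ t ∈ Set.Ici (2:ℝ), HasDerivAt J (J' t) t)
    (hJ' : ∀ t ∈ Set.Ici (2:ℝ), HasDerivAt J' ((t/2) ^ (-2 - ε) * J t) t)
    (hJ2 : J 2 = 0) (hJ'2 : J' 2 = 1) :
    MonotoneOn J' (Set.Ici (2:ℝ)) ∧
    (∀ t ∈ Set.Ici (2:ℝ), 1 ≤ J' t) ∧
    ∃ l : ℝ, Tendsto J' atTop (nhds l) ∧
      l ≤ Real.exp (∫ t in Set.Ioi (2:ℝ), (t - 2) * (t/2) ^ (-2 - ε)) ∧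
      ∀ t ∈ Set.Ici (2:ℝ), t - 2 ≤ J t ∧ J t ≤ l * (t - 2) := by
  have hq : ∀ t ∈ Ici (2:ℝ), 0 ≤ (t / 2) ^ (-2 - ε) := fun t ht => by
    have : (0:ℝ) ≤ t := by linarith [mem_Ici.1 ht]
    positivity
  have hq_cont : ContinuousOn (fun t : ℝ => (t / 2) ^ (-2 - ε)) (Ici 2) :=
    ContinuousOn.rpow_const (by fun_prop) fun t ht => Or.inl (by linarith [mem_Ici.1 ht])
  have hJ'pos : (0:ℝ) < J' 2 := hJ'2 ▸ one_pos
  have hmono := jacobi_monotoneOn_deriv hJ hJ' hq hJ2 hJ'pos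
  have hge : ∀ t ∈ Ici (2:ℝ), 1 ≤ J' t := fun t ht => hJ'2 ▸ hmono self_mem_Ici ht ht
  have hbound : ∀ t ∈ Ici (2:ℝ),
      J' t ≤ Real.exp (∫ t in Ioi (2:ℝ), (t - 2) * (t/2) ^ (-2 - ε)) := by
    intro t ht
    have hlog := jacobi_log_deriv_sub_le hJ hJ' hq hq_cont hJ2 hJ'pos t ht
    rw [hJ'2, Real.log_one, sub_zero] at hlog
    rw [← Real.exp_log (hJ'pos.trans_le (hmono self_mem_Ici ht ht))]
    exact Real.exp_le_exp.2 (hlog.trans (intervalIntegral_le_setIntegral_Ioi ht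
      (integrableOn_Ioi_sub_mul_div_rpow two_pos (by linarith)) fun s hs =>
        mul_nonneg (sub_nonneg.2 hs.le) (hq s (mem_Ici_of_Ioi hs))))
  obtain ⟨l, hlim, hle, hl⟩ := hmono.exists_tendsto_atTop_of_le hbound
  refine ⟨hmono, hge, l, hlim, hl, fun t ht => ⟨?_, ?_⟩⟩
  · have := mul_sub_le_sub_of_le_hasDerivAt ht (fun s hs => hJ s hs.1) fun s hs => hge s hs.1
    linarith
  · have := sub_le_mul_sub_of_hasDerivAt_le ht (fun s hs => hJ s hs.1) fun s hs => hle s hs.1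
    linarith

/-- Properties of the solution of the Jacobi comparison ODE
`J''(t) = (t/2)^{-2-ε} J(t)` on `[2,∞)` with `J(2) = 0`, `J'(2) = 1`:
`J'` is nondecreasing, `1 ≤ J'`, the limit `J'(∞)` exists with
`J'(∞) ≤ exp(∫₂^∞ (t-2)(t/2)^{-2-ε} dt)`, and `t - 2 ≤ J(t) ≤ J'(∞)(t-2)`. -/
theorem jacobi_comparison_ODE_properties
    (ε : ℝ) (hε : 0 < ε) (hε' : ε < 1/100)
    (J J' : ℝ → ℝ)
    (hJ : ∀ t ∈ Set.Ici (2:ℝ), HasDerivAt J (J' t) t)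
    (hJ' : ∀ t ∈ Set.Ici (2:ℝ), HasDerivAt J' ((t/2) ^ (-2 - ε) * J t) t)
    (hJ2 : J 2 = 0) (hJ'2 : J' 2 = 1) :
    MonotoneOn J' (Set.Ici (2:ℝ)) ∧
    (∀ t ∈ Set.Ici (2:ℝ), 1 ≤ J' t) ∧
    ∃ l : ℝ, Tendsto J' atTop (nhds l) ∧
      l ≤ Real.exp (∫ t in Set.Ioi (2:ℝ), (t - 2) * (t/2) ^ (-2 - ε)) ∧
      ∀ t ∈ Set.Ici (2:ℝ), t - 2 ≤ J t ∧ J t ≤ l * (t - 2) :=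
  jacobi_comparison_ODE_properties_general ε hε J J' hJ hJ' hJ2 hJ'2
end

section
/- There is no 2-dimensional Lie subalgebra of the Lie algebra of Euclidean motions of R^4 of the form {x ↦ ax + b : a ∈ su(2), b ∈ R^4} (su(2) acting on R^4 = C^2) whose generators have nonzero rotation part. Precisely: if e₁(x) = ax + b and e₂(x) = Ax + B with a, A ∈ su(2), (a,b) and (A,B) linearly independent, and [e₁, e₂] = c·e₁ for some scalar c, where [ax+b, Ax+B] = [a,A]x + (aB - Ab), then a = A = 0. -/
/-!
A pure imaginary quaternion `a` squares to the real number `-‖a‖²`, which is central. Hence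
`a [a, A] + [a, A] a = a²A - Aa² = 0`, so `[a, A] = c a` forces `2c a² = 0`, i.e. `c = 0` when
`a ≠ 0`. Then `a` and `A` commute, so `aA` is self-adjoint, hence real, and `A` is a real multiple
`t a`; cancelling `a` in `aB = Ab = t ab` gives `B = t b`, against linear independence. So `a = 0`,
and then `Ab = -c b` with `b ≠ 0` makes `A` the real number `-c`, which is pure only if `A = 0`.
-/

namespace Quaternion

theorem mul_self_eq_neg_normSq {R : Type*} [CommRing R] [NoZeroDivisors R] [CharZero R]
    {a : ℍ[R]} (ha : a.re = 0) : a * a = -((normSq a : R) : ℍ[R]) := by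
  rw [← self_mul_star, star_eq_neg.mpr ha, mul_neg, neg_neg]

variable {a A b : ℍ[ℝ]}

theorem eq_zero_of_mul_sub_mul_eq_smul_self {c : ℝ} (ha : a.re = 0) (ha0 : a ≠ 0)
    (h : a * A - A * a = c • a) : c = 0 := by
  have hsq_comm : a * a * A = A * (a * a) := by
    rw [mul_self_eq_neg_normSq ha, neg_mul, mul_neg, coe_commutes]
  have hanti : a * (a * A - A * a) + (a * A - A * a) * a = 0 := by
    rw [mul_sub, sub_mul, ← mul_assoc, hsq_comm]
    simp only [mul_assoc]
    abel
  rw [h, mul_smul_comm, smul_mul_assoc, ← two_smul ℝ, smul_smul] at hanti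
  have hsq : a * a ≠ 0 := mul_ne_zero ha0 ha0
  simpa using (smul_eq_zero.mp hanti).resolve_right hsq

theorem exists_eq_smul_of_commute (ha : a.re = 0) (hA : A.re = 0) (ha0 : a ≠ 0)
    (h : Commute a A) : ∃ t : ℝ, A = t • a := by
  have hreal : a * A = ((a * A).re : ℍ[ℝ]) := by
    rw [← star_eq_self, star_mul, star_eq_neg.mpr ha, star_eq_neg.mpr hA, neg_mul_neg, h.eq]
  set r := (a * A).re
  have hnorm : normSq a ≠ 0 := normSq_ne_zero.mpr ha0
  refine ⟨-(r / normSq a), ?_⟩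
  have key : -(normSq a • A) = r • a := by
    rw [← coe_mul_eq_smul, ← neg_mul, ← mul_self_eq_neg_normSq ha, mul_assoc, hreal,
      mul_coe_eq_smul]
  rw [neg_smul, div_eq_inv_mul, mul_smul, ← key, smul_neg, neg_neg, smul_smul,
    inv_mul_cancel₀ hnorm, one_smul]

theorem eq_zero_of_re_eq_zero_of_mul_eq_smul {r : ℝ} (hA : A.re = 0) (hb : b ≠ 0)
    (h : A * b = r • b) : A = 0 := by
  rw [← coe_mul_eq_smul] at h
  have hAr : A = r := mul_right_cancel₀ hb h
  rw [hAr, re_coe] at hA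
  rw [hAr, hA, coe_zero]

end Quaternion

/-- There is no 2-dimensional Lie subalgebra of affine vector fields
`x ↦ ax + b` on `ℝ⁴ = ℍ` with `a ∈ su(2)` (identified with the pure imaginary
quaternions) whose generators have nonzero rotation part.  Precisely: if
`e₁(x) = ax + b`, `e₂(x) = Ax + B` with `a, A` pure imaginary quaternions,
`(a,b)` and `(A,B)` linearly independent, and `[e₁,e₂] = c·e₁`, i.e.
`[a,A] = aA - Aa = c·a` and `aB - Ab = c·b`, then `a = 0` and `A = 0`. -/
theorem no_two_dim_subalgebra_with_rotation
    (a A b B : Quaternion ℝ) (ha : a.re = 0) (hA : A.re = 0) (c : ℝ)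
    (hindep : LinearIndependent ℝ ![((a, b) : Quaternion ℝ × Quaternion ℝ), (A, B)])
    (hbracket_rot : a * A - A * a = c • a)
    (hbracket_trans : a * B - A * b = c • b) :
    a = 0 ∧ A = 0 := by
  have hab : ((a, b) : Quaternion ℝ × Quaternion ℝ) ≠ 0 := hindep.ne_zero 0
  have ha0 : a = 0 := by
    by_contra ha0
    obtain rfl := Quaternion.eq_zero_of_mul_sub_mul_eq_smul_self ha ha0 hbracket_rot
    rw [zero_smul, sub_eq_zero] at hbracket_rot hbracket_trans
    obtain ⟨t, rfl⟩ := Quaternion.exists_eq_smul_of_commute ha hA ha0 hbracket_rot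
    have hB : B = t • b := by
      rw [smul_mul_assoc, ← mul_smul_comm] at hbracket_trans
      exact mul_left_cancel₀ ha0 hbracket_trans
    exact (LinearIndependent.pair_iff' hab).mp hindep t (by rw [hB, Prod.smul_mk])
  subst ha0
  have hb : b ≠ 0 := by simpa using hab
  refine ⟨rfl, Quaternion.eq_zero_of_re_eq_zero_of_mul_eq_smul hA hb (r := -c) ?_⟩
  rw [zero_mul, zero_sub] at hbracket_trans
  rw [neg_smul, ← hbracket_trans, neg_neg]
end

section
/- Let A = (a b; c d) be in GL(2,Z) and suppose there exists λ ∈ C with Im λ ≠ 0 (equivalently λ ∉ R) and τ ∈ C with {1, τ} linearly independent over R such that a + bτ = λ and c + dτ = λτ. Then det A = 1, tr A ∈ {-1, 0, 1}, and λ is a primitive root of unity of order 3, 4, or 6; i.e., λ ∈ {e^{±iπ/3}, e^{±iπ/2}, e^{±2iπ/3}}. -/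
/-!
The two relations say that `λ` is an eigenvalue of `A` (eigenvector `(1, τ)`), so
`λ² - (a + d) λ + det A = 0`. As this real quadratic has the nonreal root `λ`, its roots are
`λ` and `conj λ`: hence `det A = |λ|² > 0`, so `det A = 1`, and `tr A = 2 Re λ` with
`(Re λ)² < |λ|² = 1`, so `tr A ∈ {-1, 0, 1}`. Finally `λ` lies on the unit circle with real
part `-1/2`, `0` or `1/2`, which pins it down up to complex conjugation.
-/

open Complex

theorem sq_sub_trace_mul_add_det_eq_zero {R : Type*} [CommRing R] {a b c d lam τ : R}
    (h1 : a + b * τ = lam) (h2 : c + d * τ = lam * τ) :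
    lam ^ 2 - (a + d) * lam + (a * d - b * c) = 0 := by
  linear_combination (d - lam) * h1 - b * h2

namespace Complex

theorem two_mul_re_eq_and_normSq_eq_of_quadratic {z : ℂ} {t D : ℝ} (hz : z.im ≠ 0)
    (h : z ^ 2 - t * z + D = 0) : 2 * z.re = t ∧ normSq z = D := by
  have hre := congrArg re h
  have him := congrArg im h
  simp only [sq, sub_re, add_re, mul_re, ofReal_re, ofReal_im, sub_im, add_im, mul_im,
    zero_re, zero_im] at hre him
  have htrace : 2 * z.re = t := by
    have : (2 * z.re - t) * z.im = 0 := by linarith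
    linarith [(mul_eq_zero.mp this).resolve_right hz]
  refine ⟨htrace, ?_⟩
  rw [normSq_apply]
  linear_combination -hre + z.re * htrace

theorem re_mul_self_lt_normSq {z : ℂ} (hz : z.im ≠ 0) : z.re * z.re < normSq z := by
  rw [normSq_apply]
  nlinarith [mul_self_pos.mpr hz]

theorem eq_exp_mul_I_or_eq_exp_neg_mul_I {z : ℂ} {θ : ℝ} (hz : normSq z = 1)
    (hre : z.re = Real.cos θ) : z = exp (θ * I) ∨ z = exp (-θ * I) := by
  have him : z.im * z.im = Real.sin θ * Real.sin θ := by
    rw [normSq_apply] at hz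
    linear_combination hz - Real.sin_sq_add_cos_sq θ - (z.re + Real.cos θ) * hre
  rw [← ofReal_neg]
  rcases mul_self_eq_mul_self_iff.mp him with him | him
  · refine .inl <| Complex.ext ?_ ?_
    · rw [exp_ofReal_mul_I_re, hre]
    · rw [exp_ofReal_mul_I_im, him]
  · refine .inr <| Complex.ext ?_ ?_
    · rw [exp_ofReal_mul_I_re, hre, Real.cos_neg]
    · rw [exp_ofReal_mul_I_im, him, Real.sin_neg]

theorem eq_primitive_root_of_two_mul_re {z : ℂ} (hz : normSq z = 1)
    (hre : 2 * z.re = -1 ∨ 2 * z.re = 0 ∨ 2 * z.re = 1) :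
    z = exp ((Real.pi : ℂ) / 3 * I) ∨ z = exp (-((Real.pi : ℂ) / 3) * I) ∨
      z = exp ((Real.pi : ℂ) / 2 * I) ∨ z = exp (-((Real.pi : ℂ) / 2) * I) ∨
      z = exp (2 * (Real.pi : ℂ) / 3 * I) ∨ z = exp (-(2 * (Real.pi : ℂ) / 3) * I) := by
  rcases hre with hre | hre | hre
  · have hcos : Real.cos (2 * Real.pi / 3) = -(1 / 2) := by
      rw [show 2 * Real.pi / 3 = Real.pi - Real.pi / 3 by ring, Real.cos_pi_sub,
        Real.cos_pi_div_three]
    have := eq_exp_mul_I_or_eq_exp_neg_mul_I hz (θ := 2 * Real.pi / 3) (by linarith)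
    push_cast at this
    tauto
  · have := eq_exp_mul_I_or_eq_exp_neg_mul_I hz (θ := Real.pi / 2)
      (by rw [Real.cos_pi_div_two]; linarith)
    push_cast at this
    tauto
  · have := eq_exp_mul_I_or_eq_exp_neg_mul_I hz (θ := Real.pi / 3)
      (by rw [Real.cos_pi_div_three]; linarith)
    push_cast at this
    tauto

end Complex

theorem elliptic_monodromy_classification_general
    (a b c d : ℤ) (hdet : a * d - b * c = 1 ∨ a * d - b * c = -1)
    (lam τ : ℂ) (hlam : lam.im ≠ 0)
    (h1 : (a : ℂ) + b * τ = lam)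
    (h2 : (c : ℂ) + d * τ = lam * τ) :
    a * d - b * c = 1 ∧ (a + d = -1 ∨ a + d = 0 ∨ a + d = 1) ∧
    (lam = Complex.exp ((Real.pi : ℂ) / 3 * Complex.I) ∨
     lam = Complex.exp (-((Real.pi : ℂ) / 3) * Complex.I) ∨
     lam = Complex.exp ((Real.pi : ℂ) / 2 * Complex.I) ∨
     lam = Complex.exp (-((Real.pi : ℂ) / 2) * Complex.I) ∨
     lam = Complex.exp (2 * (Real.pi : ℂ) / 3 * Complex.I) ∨
     lam = Complex.exp (-(2 * (Real.pi : ℂ) / 3) * Complex.I)) := by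
  have hquad := sq_sub_trace_mul_add_det_eq_zero h1 h2
  obtain ⟨htrace, hnormSq⟩ := two_mul_re_eq_and_normSq_eq_of_quadratic
    (t := ((a + d : ℤ) : ℝ)) (D := ((a * d - b * c : ℤ) : ℝ)) hlam
    (by push_cast; exact hquad)
  have hdet_one : a * d - b * c = 1 := by
    have hpos : (0 : ℝ) < ((a * d - b * c : ℤ) : ℝ) :=
      hnormSq ▸ normSq_pos.mpr fun h ↦ hlam (by simp [h])
    have : 0 < a * d - b * c := by exact_mod_cast hpos
    omega
  rw [hdet_one, Int.cast_one] at hnormSq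
  have htrace_sq : (a + d) ^ 2 < 4 := by
    have := re_mul_self_lt_normSq hlam
    have : ((a + d : ℤ) : ℝ) ^ 2 < 4 := by rw [← htrace]; nlinarith
    exact_mod_cast this
  have htrace_range : a + d = -1 ∨ a + d = 0 ∨ a + d = 1 := by
    have : -2 < a + d ∧ a + d < 2 := by constructor <;> nlinarith
    omega
  refine ⟨hdet_one, htrace_range, eq_primitive_root_of_two_mul_re hnormSq ?_⟩
  rw [htrace]
  exact_mod_cast htrace_range

/-- If `A = (a b; c d) ∈ GL(2,ℤ)` fixes the lattice `ℤ ⊕ ℤτ` (with `τ ∉ ℝ`)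
via multiplication by a nonreal complex number `λ`, i.e. `a + bτ = λ` and
`c + dτ = λτ`, then `det A = 1`, `tr A ∈ {-1,0,1}`, and `λ` is a primitive
root of unity of order 3, 4 or 6: `λ ∈ {e^{±iπ/3}, e^{±iπ/2}, e^{±2iπ/3}}`. -/
theorem elliptic_monodromy_classification
    (a b c d : ℤ) (hdet : a * d - b * c = 1 ∨ a * d - b * c = -1)
    (lam τ : ℂ) (hlam : lam.im ≠ 0) (hτ : τ.im ≠ 0)
    (h1 : (a : ℂ) + b * τ = lam)
    (h2 : (c : ℂ) + d * τ = lam * τ) :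
    a * d - b * c = 1 ∧ (a + d = -1 ∨ a + d = 0 ∨ a + d = 1) ∧
    (lam = Complex.exp ((Real.pi : ℂ) / 3 * Complex.I) ∨
     lam = Complex.exp (-((Real.pi : ℂ) / 3) * Complex.I) ∨
     lam = Complex.exp ((Real.pi : ℂ) / 2 * Complex.I) ∨
     lam = Complex.exp (-((Real.pi : ℂ) / 2) * Complex.I) ∨
     lam = Complex.exp (2 * (Real.pi : ℂ) / 3 * Complex.I) ∨
     lam = Complex.exp (-(2 * (Real.pi : ℂ) / 3) * Complex.I)) :=
  elliptic_monodromy_classification_general a b c d hdet lam τ hlam h1 h2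
end

section
/- Weighted estimate for Fourier modes on a half-cylinder: let λ ≥ 0 and δ > 0 with δ ≠ 4πλ. For any smooth f : [0,∞) → R with compact support in (0,∞), ∫₀^∞ f² e^{δr} dr ≤ 16/((δ+4πλ)²(δ-4πλ)²) · ∫₀^∞ [(d/dr − 2πλ)(d/dr + 2πλ)f]² e^{δr} dr, where (d/dr − 2πλ)(d/dr + 2πλ)f = f'' − 4π²λ²f. -/
open MeasureTheory Real Set Function

lemma zero_on_nonpos {g : ℝ → ℝ} (h : Function.support g ⊆ Set.Ioi 0) {x : ℝ} (hx : x ≤ 0) :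
    g x = 0 := by
  by_contra hgx
  exact absurd (h (mem_support.mpr hgx)) (by simpa using hx)

lemma deriv_zero_on_nonpos {g : ℝ → ℝ} (hd : Differentiable ℝ g)
    (h : Function.support g ⊆ Set.Ioi 0) {x : ℝ} (hx : x ≤ 0) : deriv g x = 0 := by
  have U : UniqueDiffWithinAt ℝ (Iic (0:ℝ)) x := uniqueDiffOn_Iic 0 x hx
  have h1 : derivWithin g (Iic 0) x = deriv g x :=
    ((hd x).hasDerivAt.hasDerivWithinAt).derivWithin U
  have h2 : derivWithin g (Iic 0) x = 0 := by
    have hc : HasDerivWithinAt g 0 (Iic 0) x :=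
      (hasDerivWithinAt_const x _ (0:ℝ)).congr (fun y hy => zero_on_nonpos h hy)
        (zero_on_nonpos h hx)
    exact hc.derivWithin U
  rw [← h1, h2]

lemma hardy_exp {ν : ℝ} (hν : ν ≠ 0) (g : ℝ → ℝ) (hg : ContDiff ℝ (⊤ : ℕ∞) g)
    (hgs : HasCompactSupport g) (hgp : Function.support g ⊆ Set.Ioi 0) :
    ∫ r in Set.Ioi (0:ℝ), (g r) ^ 2 * Real.exp (ν * r)
      ≤ 4 / ν ^ 2 * ∫ r in Set.Ioi (0:ℝ), (deriv g r) ^ 2 * Real.exp (ν * r) := by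
  have hgd : Differentiable ℝ g := hg.differentiable (by simp)
  have hgc : Continuous g := hg.continuous
  have hg'c : Continuous (deriv g) := hg.continuous_deriv (mod_cast le_top)
  have hec : Continuous fun r : ℝ => Real.exp (ν * r) :=
    Real.continuous_exp.comp (continuous_const.mul continuous_id)
  have he : ∀ r : ℝ, HasDerivAt (fun r => Real.exp (ν * r)) (ν * Real.exp (ν * r)) r := by
    intro r
    have := ((hasDerivAt_id r).const_mul ν).exp
    simpa [mul_comm] using this
  set F : ℝ → ℝ := fun r => g r ^ 2 * Real.exp (ν * r) with hF
  have hF' : ∀ r, HasDerivAt F ((2 * g r * deriv g r + ν * g r ^ 2) * Real.exp (ν * r)) r := by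
    intro r
    have h1 : HasDerivAt (fun r => g r ^ 2) (2 * g r * deriv g r) r := by
      simpa [mul_comm, mul_assoc] using ((hgd r).hasDerivAt.fun_pow 2)
    have := h1.fun_mul (he r)
    refine this.congr_deriv ?_
    ring
  have hF1 : ContDiff ℝ 1 F :=
    ((hg.of_le (mod_cast le_top)).pow 2).mul (Real.contDiff_exp.comp (contDiff_const.mul contDiff_id))
  have hFsupp : HasCompactSupport F := by
    apply HasCompactSupport.intro hgs
    intro x hx
    simp [hF, image_eq_zero_of_notMem_tsupport hx]
  -- integrability of the three integrands
  have int1 : IntegrableOn (fun r => g r ^ 2 * Real.exp (ν * r)) (Ioi 0) :=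
    (((hgc.pow 2).mul hec).integrable_of_hasCompactSupport hFsupp).integrableOn
  have hsupp2 : HasCompactSupport fun r => (deriv g r) ^ 2 * Real.exp (ν * r) := by
    apply HasCompactSupport.intro hgs.deriv
    intro x hx
    simp [image_eq_zero_of_notMem_tsupport hx]
  have int2 : IntegrableOn (fun r => (deriv g r) ^ 2 * Real.exp (ν * r)) (Ioi 0) :=
    (((hg'c.pow 2).mul hec).integrable_of_hasCompactSupport hsupp2).integrableOn
  have hsupp3 : HasCompactSupport fun r => 2 * g r * deriv g r * Real.exp (ν * r) := by
    apply HasCompactSupport.intro hgs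
    intro x hx
    simp [image_eq_zero_of_notMem_tsupport hx]
  have int3 : IntegrableOn (fun r => 2 * g r * deriv g r * Real.exp (ν * r)) (Ioi 0) :=
    (((((continuous_const.mul hgc)).mul hg'c).mul hec).integrable_of_hasCompactSupport
      hsupp3).integrableOn
  have hsuppabs : HasCompactSupport fun r => |2 * g r * deriv g r| * Real.exp (ν * r) := by
    apply HasCompactSupport.intro hgs
    intro x hx
    simp [image_eq_zero_of_notMem_tsupport hx]
  have intabs : IntegrableOn (fun r => |2 * g r * deriv g r| * Real.exp (ν * r)) (Ioi 0) :=
    ((((continuous_const.mul hgc).mul hg'c).abs.mul hec).integrable_of_hasCompactSupport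
      hsuppabs).integrableOn
  set a := ∫ r in Ioi (0:ℝ), g r ^ 2 * Real.exp (ν * r) with ha
  set b := ∫ r in Ioi (0:ℝ), (deriv g r) ^ 2 * Real.exp (ν * r) with hb
  set c := ∫ r in Ioi (0:ℝ), 2 * g r * deriv g r * Real.exp (ν * r) with hc
  -- integration by parts : ∫ deriv F = -F 0 = 0
  have key : c + ν * a = 0 := by
    have h0 : ∫ x in Ioi (0:ℝ), deriv F x = -F 0 :=
      HasCompactSupport.integral_Ioi_deriv_eq hF1 hFsupp 0
    have hF0 : F 0 = 0 := by
      simp [hF, zero_on_nonpos hgp (le_refl (0:ℝ))]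
    have hderivF : deriv F = fun r => (2 * g r * deriv g r + ν * g r ^ 2) * Real.exp (ν * r) :=
      funext fun r => (hF' r).deriv
    rw [hderivF, hF0, neg_zero] at h0
    have hsplit : ∫ x in Ioi (0:ℝ), (2 * g x * deriv g x + ν * g x ^ 2) * Real.exp (ν * x)
        = c + ν * a := by
      have : (fun x => (2 * g x * deriv g x + ν * g x ^ 2) * Real.exp (ν * x))
          = fun x => 2 * g x * deriv g x * Real.exp (ν * x)
            + ν * (g x ^ 2 * Real.exp (ν * x)) := by
        funext x; ring
      rw [this, integral_add int3 (int1.const_mul ν), integral_const_mul]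
    rw [hsplit] at h0
    exact h0
  have ha0 : 0 ≤ a := by
    apply setIntegral_nonneg measurableSet_Ioi
    intro x _
    positivity
  have hb0 : 0 ≤ b := by
    apply setIntegral_nonneg measurableSet_Ioi
    intro x _
    positivity
  have hνpos : 0 < |ν| := abs_pos.mpr hν
  -- pointwise bound and integral bound
  have hbound : ∫ r in Ioi (0:ℝ), |2 * g r * deriv g r| * Real.exp (ν * r)
      ≤ (|ν| / 2) * a + (2 / |ν|) * b := by
    have : (|ν| / 2) * a + (2 / |ν|) * b
        = ∫ r in Ioi (0:ℝ), ((|ν| / 2) * (g r ^ 2 * Real.exp (ν * r))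
            + (2 / |ν|) * ((deriv g r) ^ 2 * Real.exp (ν * r))) := by
      rw [integral_add (int1.const_mul _) (int2.const_mul _), integral_const_mul,
        integral_const_mul]
    rw [this]
    apply setIntegral_mono_on intabs
      ((int1.const_mul _).add (int2.const_mul _)) measurableSet_Ioi
    intro x _
    have hx : (0:ℝ) < Real.exp (ν * x) := Real.exp_pos _
    have hyoung : ∀ u v : ℝ, 2 * u * v ≤ |ν| / 2 * u ^ 2 + 2 / |ν| * v ^ 2 := by
      intro u v
      have h2 : 4 * |ν| * (u * v) ≤ |ν| ^ 2 * u ^ 2 + 4 * v ^ 2 := by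
        nlinarith [sq_nonneg (|ν| * u - 2 * v)]
      calc 2 * u * v = (4 * |ν| * (u * v)) / (2 * |ν|) := by field_simp; ring
        _ ≤ (|ν| ^ 2 * u ^ 2 + 4 * v ^ 2) / (2 * |ν|) := by gcongr
        _ = |ν| / 2 * u ^ 2 + 2 / |ν| * v ^ 2 := by field_simp; ring
    have h2 : |2 * g x * deriv g x| ≤ |ν| / 2 * g x ^ 2 + 2 / |ν| * (deriv g x) ^ 2 := by
      rw [abs_le]
      constructor
      · have := hyoung (g x) (-(deriv g x))
        nlinarith [this]
      · exact (by nlinarith [hyoung (g x) (deriv g x)])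
    calc |2 * g x * deriv g x| * Real.exp (ν * x)
        ≤ (|ν| / 2 * g x ^ 2 + 2 / |ν| * (deriv g x) ^ 2) * Real.exp (ν * x) :=
          mul_le_mul_of_nonneg_right h2 hx.le
      _ = |ν| / 2 * (g x ^ 2 * Real.exp (ν * x))
          + 2 / |ν| * ((deriv g x) ^ 2 * Real.exp (ν * x)) := by ring
  have hcabs : |c| ≤ ∫ r in Ioi (0:ℝ), |2 * g r * deriv g r| * Real.exp (ν * r) := by
    have := norm_integral_le_integral_norm (μ := volume.restrict (Ioi (0:ℝ)))
      (f := fun r => 2 * g r * deriv g r * Real.exp (ν * r))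
    rw [Real.norm_eq_abs] at this
    refine this.trans (le_of_eq ?_)
    congr 1
    funext r
    rw [Real.norm_eq_abs, abs_mul, abs_of_pos (Real.exp_pos _)]
  -- combine : |ν| a = |c| ≤ |ν|/2 a + 2/|ν| b
  have hmain : |ν| * a ≤ (|ν| / 2) * a + (2 / |ν|) * b := by
    have h1 : ν * a = -c := by linarith
    have h2 : |ν| * a = |c| := by
      rw [← abs_of_nonneg ha0, ← abs_mul, h1, abs_neg]
    rw [h2]
    exact hcabs.trans hbound
  have hsq : |ν| ^ 2 = ν ^ 2 := sq_abs ν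
  rw [ha, hb] at *
  have : (|ν| / 2) * a ≤ (2 / |ν|) * b := by linarith
  have hfin : a ≤ 4 / ν ^ 2 * b := by
    have h4 : a = (2 / |ν|) * (|ν| / 2 * a) := by field_simp
    have h5 : (2 / |ν|) * (|ν| / 2 * a) ≤ (2 / |ν|) * (2 / |ν| * b) :=
      mul_le_mul_of_nonneg_left this (by positivity)
    have h6 : (2 / |ν|) * (2 / |ν| * b) = 4 / ν ^ 2 * b := by
      rw [← hsq]; field_simp; ring
    linarith [h4 ▸ h5, h6 ▸ h5]
  exact hfin

/-- Weighted estimate for Fourier modes on the half-cylinder `[0,∞) × T³`: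
for `λ ≥ 0`, `δ > 0` with `δ ≠ 4πλ`, and any smooth `f` compactly supported in
`(0,∞)`,
`∫₀^∞ f² e^{δr} dr ≤ 16/((δ+4πλ)²(δ-4πλ)²) ∫₀^∞ (f'' - 4π²λ²f)² e^{δr} dr`. -/
theorem weighted_estimate_cylinder_modes
    (lam δ : ℝ) (hlam : 0 ≤ lam) (hδ : 0 < δ) (hne : δ ≠ 4 * π * lam)
    (f : ℝ → ℝ) (hf : ContDiff ℝ (⊤ : ℕ∞) f) (hsupp : HasCompactSupport f)
    (hpos : Function.support f ⊆ Set.Ioi 0) :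
    ∫ r in Set.Ioi (0:ℝ), (f r) ^ 2 * Real.exp (δ * r)
      ≤ 16 / ((δ + 4 * π * lam) ^ 2 * (δ - 4 * π * lam) ^ 2) *
        ∫ r in Set.Ioi (0:ℝ),
          (deriv (deriv f) r - 4 * π ^ 2 * lam ^ 2 * f r) ^ 2 * Real.exp (δ * r) := by
  have hπ : (0:ℝ) < π := Real.pi_pos
  have hfi : ContDiff ℝ (⊤ : ℕ∞) f := hf.of_le (by simp)
  have hfd : Differentiable ℝ f := hfi.differentiable (by simp)
  have hfderiv : ContDiff ℝ (⊤ : ℕ∞) (deriv f) := by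
    have := (contDiff_infty_iff_deriv.mp hfi).2
    exact this
  have hf'd : Differentiable ℝ (deriv f) := hfderiv.differentiable (by simp)
  have hν₁ : δ - 4 * π * lam ≠ 0 := sub_ne_zero.mpr hne
  have hν₂pos : (0:ℝ) < δ + 4 * π * lam := by positivity
  have hν₂ : δ + 4 * π * lam ≠ 0 := ne_of_gt hν₂pos
  -- exp derivative helper
  have hexp : ∀ (k r : ℝ), HasDerivAt (fun r => Real.exp (k * r)) (k * Real.exp (k * r)) r := by
    intro k r
    have := ((hasDerivAt_id r).const_mul k).exp
    simpa [mul_comm] using this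
  have hexpc : ∀ k : ℝ, ContDiff ℝ (⊤ : ℕ∞) (fun r : ℝ => Real.exp (k * r)) := fun k =>
    Real.contDiff_exp.comp (contDiff_const.mul contDiff_id)
  -- first function
  set g₁ : ℝ → ℝ := fun r => Real.exp (2 * π * lam * r) * f r with hg₁def
  have hg₁c : ContDiff ℝ (⊤ : ℕ∞) g₁ := (hexpc _).mul hfi
  have hg₁s : HasCompactSupport g₁ := by
    apply HasCompactSupport.intro hsupp
    intro x hx
    simp [hg₁def, image_eq_zero_of_notMem_tsupport hx]
  have hg₁p : Function.support g₁ ⊆ Set.Ioi 0 := by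
    intro x hx
    apply hpos
    rw [mem_support] at hx ⊢
    intro h
    exact hx (by simp [hg₁def, h])
  have hg₁' : ∀ r, deriv g₁ r
      = Real.exp (2 * π * lam * r) * (deriv f r + 2 * π * lam * f r) := by
    intro r
    have h := (hexp (2 * π * lam) r).fun_mul (hfd r).hasDerivAt
    have h2 : HasDerivAt g₁
        (Real.exp (2 * π * lam * r) * (deriv f r + 2 * π * lam * f r)) r := by
      refine h.congr_deriv ?_
      ring
    exact h2.deriv
  have E1 := hardy_exp hν₁ g₁ hg₁c hg₁s hg₁p
  -- rewrite both integrals of E1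
  have expcomb : ∀ k ν r : ℝ, Real.exp (k * r) ^ 2 * Real.exp (ν * r)
      = Real.exp ((2 * k + ν) * r) := by
    intro k ν r
    rw [sq, ← Real.exp_add, ← Real.exp_add]
    congr 1
    ring
  set p : ℝ → ℝ := fun r => deriv f r + 2 * π * lam * f r with hpdef
  have e1 : ∫ r in Set.Ioi (0:ℝ), g₁ r ^ 2 * Real.exp ((δ - 4 * π * lam) * r)
      = ∫ r in Set.Ioi (0:ℝ), f r ^ 2 * Real.exp (δ * r) := by
    apply setIntegral_congr_fun measurableSet_Ioi
    intro r _
    have := expcomb (2 * π * lam) (δ - 4 * π * lam) r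
    calc (Real.exp (2 * π * lam * r) * f r) ^ 2 * Real.exp ((δ - 4 * π * lam) * r)
        = f r ^ 2 * (Real.exp (2 * π * lam * r) ^ 2 * Real.exp ((δ - 4 * π * lam) * r)) := by
          ring
      _ = f r ^ 2 * Real.exp (δ * r) := by rw [this]; ring_nf
  have e2 : ∫ r in Set.Ioi (0:ℝ), (deriv g₁ r) ^ 2 * Real.exp ((δ - 4 * π * lam) * r)
      = ∫ r in Set.Ioi (0:ℝ), p r ^ 2 * Real.exp (δ * r) := by
    apply setIntegral_congr_fun measurableSet_Ioi
    intro r _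
    beta_reduce
    rw [hg₁' r]
    have := expcomb (2 * π * lam) (δ - 4 * π * lam) r
    calc (Real.exp (2 * π * lam * r) * (deriv f r + 2 * π * lam * f r)) ^ 2
          * Real.exp ((δ - 4 * π * lam) * r)
        = (deriv f r + 2 * π * lam * f r) ^ 2
          * (Real.exp (2 * π * lam * r) ^ 2 * Real.exp ((δ - 4 * π * lam) * r)) := by ring
      _ = p r ^ 2 * Real.exp (δ * r) := by rw [this]; simp only [hpdef]; ring_nf
  rw [e1, e2] at E1
  -- second application
  have hpc : ContDiff ℝ (⊤ : ℕ∞) p := hfderiv.add (contDiff_const.mul hfi)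
  have hpd : Differentiable ℝ p := hpc.differentiable (by simp)
  have hps : HasCompactSupport p := by
    apply HasCompactSupport.intro hsupp
    intro x hx
    have h1 : f x = 0 := image_eq_zero_of_notMem_tsupport hx
    have h2 : deriv f x = 0 := by
      by_contra h
      exact hx (support_deriv_subset (mem_support.mpr h))
    simp [hpdef, h1, h2]
  have hpp : Function.support p ⊆ Set.Ioi 0 := by
    intro x hx
    rw [mem_support] at hx
    by_contra h
    have hx0 : x ≤ 0 := by simpa using h
    exact hx (by simp [hpdef, zero_on_nonpos hpos hx0, deriv_zero_on_nonpos hfd hpos hx0])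
  have hp' : ∀ r, deriv p r = deriv (deriv f) r + 2 * π * lam * deriv f r := by
    intro r
    exact ((hf'd r).hasDerivAt.add ((hfd r).hasDerivAt.const_mul (2 * π * lam))).deriv
  set g₂ : ℝ → ℝ := fun r => Real.exp (-(2 * π * lam) * r) * p r with hg₂def
  have hg₂c : ContDiff ℝ (⊤ : ℕ∞) g₂ := (hexpc _).mul hpc
  have hg₂s : HasCompactSupport g₂ := by
    apply HasCompactSupport.intro hps
    intro x hx
    simp [hg₂def, image_eq_zero_of_notMem_tsupport hx]
  have hg₂p : Function.support g₂ ⊆ Set.Ioi 0 := by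
    intro x hx
    apply hpp
    rw [mem_support] at hx ⊢
    intro h
    exact hx (by simp [hg₂def, h])
  have hg₂' : ∀ r, deriv g₂ r
      = Real.exp (-(2 * π * lam) * r)
        * (deriv (deriv f) r - 4 * π ^ 2 * lam ^ 2 * f r) := by
    intro r
    have h := (hexp (-(2 * π * lam)) r).fun_mul (hpd r).hasDerivAt
    have h2 : HasDerivAt g₂
        (Real.exp (-(2 * π * lam) * r)
          * (deriv (deriv f) r - 4 * π ^ 2 * lam ^ 2 * f r)) r := by
      refine h.congr_deriv ?_
      rw [hp' r]
      simp only [hpdef]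
      ring
    exact h2.deriv
  have E2 := hardy_exp hν₂ g₂ hg₂c hg₂s hg₂p
  have e3 : ∫ r in Set.Ioi (0:ℝ), g₂ r ^ 2 * Real.exp ((δ + 4 * π * lam) * r)
      = ∫ r in Set.Ioi (0:ℝ), p r ^ 2 * Real.exp (δ * r) := by
    apply setIntegral_congr_fun measurableSet_Ioi
    intro r _
    have := expcomb (-(2 * π * lam)) (δ + 4 * π * lam) r
    calc (Real.exp (-(2 * π * lam) * r) * p r) ^ 2 * Real.exp ((δ + 4 * π * lam) * r)
        = p r ^ 2 * (Real.exp (-(2 * π * lam) * r) ^ 2 * Real.exp ((δ + 4 * π * lam) * r)) := by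
          ring
      _ = p r ^ 2 * Real.exp (δ * r) := by rw [this]; ring_nf
  have e4 : ∫ r in Set.Ioi (0:ℝ), (deriv g₂ r) ^ 2 * Real.exp ((δ + 4 * π * lam) * r)
      = ∫ r in Set.Ioi (0:ℝ),
          (deriv (deriv f) r - 4 * π ^ 2 * lam ^ 2 * f r) ^ 2 * Real.exp (δ * r) := by
    apply setIntegral_congr_fun measurableSet_Ioi
    intro r _
    beta_reduce
    rw [hg₂' r]
    have := expcomb (-(2 * π * lam)) (δ + 4 * π * lam) r
    calc (Real.exp (-(2 * π * lam) * r) * (deriv (deriv f) r - 4 * π ^ 2 * lam ^ 2 * f r)) ^ 2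
          * Real.exp ((δ + 4 * π * lam) * r)
        = (deriv (deriv f) r - 4 * π ^ 2 * lam ^ 2 * f r) ^ 2
          * (Real.exp (-(2 * π * lam) * r) ^ 2 * Real.exp ((δ + 4 * π * lam) * r)) := by ring
      _ = (deriv (deriv f) r - 4 * π ^ 2 * lam ^ 2 * f r) ^ 2 * Real.exp (δ * r) := by
          rw [this]; ring_nf
  rw [e3, e4] at E2
  -- combine
  have hcoef : (0:ℝ) ≤ 4 / (δ - 4 * π * lam) ^ 2 := by positivity
  calc ∫ r in Set.Ioi (0:ℝ), f r ^ 2 * Real.exp (δ * r)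
      ≤ 4 / (δ - 4 * π * lam) ^ 2 * ∫ r in Set.Ioi (0:ℝ), p r ^ 2 * Real.exp (δ * r) := E1
    _ ≤ 4 / (δ - 4 * π * lam) ^ 2 * (4 / (δ + 4 * π * lam) ^ 2 *
          ∫ r in Set.Ioi (0:ℝ),
            (deriv (deriv f) r - 4 * π ^ 2 * lam ^ 2 * f r) ^ 2 * Real.exp (δ * r)) :=
        mul_le_mul_of_nonneg_left E2 hcoef
    _ = 16 / ((δ + 4 * π * lam) ^ 2 * (δ - 4 * π * lam) ^ 2) *
          ∫ r in Set.Ioi (0:ℝ),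
            (deriv (deriv f) r - 4 * π ^ 2 * lam ^ 2 * f r) ^ 2 * Real.exp (δ * r) := by
        rw [← mul_assoc]
        congr 1
        field_simp
        ring
end
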